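/- arXiv:2409.11772 — 2 statements merged into one kernel-verified Lean document; each statement's English description precedes it below -/
import Mathlib

section
/- If M is an invertible group matrix for a finite group G, then M⁻¹ is also a group matrix for G. -/
/-! Group matrices are exactly the matrices invariant under reindexing rows and columns by the
same right translation `h ↦ h * g`, and matrix inversion commutes with reindexing. -/

variable {G : Type*} [Group G] [Fintype G] [DecidableEq G]

/-- `M` is a group matrix of `G`: `M_{h,h'} = c(h h'⁻¹)` for some `c : G → ℝ`. -/
def IsGroupMatrix (M : Matrix G G ℝ) : Prop :=
  ∃ c : G → ℝ, ∀ h h' : G, M h h' = c (h * h'⁻¹)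

theorem isGroupMatrix_iff_forall_submatrix_mulRight {H : Type*} [Group H] {M : Matrix H H ℝ} :
    IsGroupMatrix M ↔ ∀ g : H, M.submatrix (Equiv.mulRight g) (Equiv.mulRight g) = M := by
  constructor
  · rintro ⟨c, hc⟩ g
    ext a b
    simp only [Matrix.submatrix_apply, Equiv.coe_mulRight, hc, mul_inv_rev, mul_assoc,
      mul_inv_cancel_left]
  · intro hM
    refine ⟨fun g => M g 1, fun a b => ?_⟩
    simpa using (congrFun₂ (hM b⁻¹) a b).symm

theorem IsGroupMatrix.inv_general {M : Matrix G G ℝ}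
    (hM : IsGroupMatrix M) :
    IsGroupMatrix M⁻¹ := by
  rw [isGroupMatrix_iff_forall_submatrix_mulRight] at hM ⊢
  intro g
  rw [← Matrix.inv_submatrix_equiv, hM g]

/-- The inverse of an invertible group matrix is a group matrix. -/
theorem IsGroupMatrix.inv {M : Matrix G G ℝ}
    (hM : IsGroupMatrix M) (hinv : IsUnit M) :
    IsGroupMatrix M⁻¹ :=
  IsGroupMatrix.inv_general hM
end

section
/- Let G be a finite group, GM the linear subspace of group matrices in ℝ^{G×G}, and M, N ∈ ℝ^{G×G}. Then dist(MN, GM) ≤ max{‖M‖_F, ‖N‖_F} · (dist(M, GM) + dist(N, GM)). -/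
variable {G : Type*} [Group G] [Fintype G] [DecidableEq G]

/-- The set of group matrices of `G`. -/
def groupMatrices (G : Type*) [Group G] : Set (Matrix G G ℝ) :=
  {M | ∃ c : G → ℝ, ∀ h h' : G, M h h' = c (h * h'⁻¹)}

/-- The Frobenius norm of a matrix. -/
noncomputable def frobNorm {α : Type*} [Fintype α] (M : Matrix α α ℝ) : ℝ :=
  Real.sqrt (∑ i, ∑ j, (M i j) ^ 2)

/-- Frobenius distance from a matrix to the set of group matrices. -/
noncomputable def distGM (M : Matrix G G ℝ) : ℝ :=
  sInf {d : ℝ | ∃ M₀ ∈ groupMatrices G, d = frobNorm (M - M₀)}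

/-!
Let `M₀`, `N₀` be the orthogonal projections of `M`, `N` onto the group matrices, so that
`‖M - M₀‖ = dist(M, GM)` and `‖N - N₀‖ = dist(N, GM)`. Group matrices
are closed under multiplication, so `M₀ N₀` is a group matrix, and
`MN - M₀N₀ = M (N - N₀) + (M - M₀) N₀`. Submultiplicativity of the Frobenius norm and
`‖N₀‖ ≤ ‖N‖` then bound `‖MN - M₀N₀‖` by `‖M‖ ‖N - N₀‖ + ‖M - M₀‖ ‖N‖`.
-/

attribute [local instance] Matrix.frobeniusNormedAddCommGroup Matrix.frobeniusNormedSpace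

theorem Submodule.norm_sub_starProjection_eq_infDist {𝕜 E : Type*} [RCLike 𝕜]
    [NormedAddCommGroup E] [InnerProductSpace 𝕜 E] (K : Submodule 𝕜 E)
    [K.HasOrthogonalProjection] (x : E) :
    ‖x - K.starProjection x‖ = Metric.infDist x K := by
  simp only [Submodule.starProjection_minimal, Metric.infDist_eq_iInf, dist_eq_norm]
  rfl

namespace Matrix

variable {l m n : Type*} [Fintype l] [Fintype m] [Fintype n]

noncomputable abbrev frobeniusInnerProductSpace : InnerProductSpace ℝ (Matrix m n ℝ) where
  inner A B := ∑ i, ∑ j, A i j * B i j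
  norm_sq_eq_re_inner A := by
    simp only [frobenius_norm_def, Real.norm_eq_abs, Real.rpow_two, sq_abs, RCLike.re_to_real]
    rw [← Real.sqrt_eq_rpow, Real.sq_sqrt (by positivity)]
    simp only [sq]
  conj_inner_symm A B := by simp [mul_comm]
  add_left A B C := by simp [add_mul, Finset.sum_add_distrib]
  smul_left A B r := by simp [mul_assoc, Finset.mul_sum]

attribute [local instance] frobeniusInnerProductSpace

theorem frobenius_norm_mul_sub_mul_le (A A₀ : Matrix l m ℝ) (B B₀ : Matrix m n ℝ) :
    ‖A * B - A₀ * B₀‖ ≤ ‖A‖ * ‖B - B₀‖ + ‖A - A₀‖ * ‖B₀‖ :=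
  calc ‖A * B - A₀ * B₀‖ = ‖A * (B - B₀) + (A - A₀) * B₀‖ := by
        rw [Matrix.mul_sub, Matrix.sub_mul, sub_add_sub_cancel]
    _ ≤ ‖A * (B - B₀)‖ + ‖(A - A₀) * B₀‖ := norm_add_le _ _
    _ ≤ ‖A‖ * ‖B - B₀‖ + ‖A - A₀‖ * ‖B₀‖ := by
        gcongr <;> exact frobenius_norm_mul _ _

theorem infDist_mul_le_of_mul_mem (K : Submodule ℝ (Matrix n n ℝ))
    (hK : ∀ A ∈ K, ∀ B ∈ K, A * B ∈ K) (A B : Matrix n n ℝ) :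
    Metric.infDist (A * B) K ≤ max ‖A‖ ‖B‖ * (Metric.infDist A K + Metric.infDist B K) := by
  have : CompleteSpace K := K.complete_of_finiteDimensional.completeSpace_coe
  set A₀ := K.starProjection A
  set B₀ := K.starProjection B
  have hB₀ : ‖B₀‖ ≤ ‖B‖ := K.norm_starProjection_apply_le B
  calc Metric.infDist (A * B) K ≤ ‖A * B - A₀ * B₀‖ := by
        rw [← dist_eq_norm]
        exact Metric.infDist_le_dist_of_mem
          (hK _ (K.starProjection_apply_mem A) _ (K.starProjection_apply_mem B))
    _ ≤ ‖A‖ * ‖B - B₀‖ + ‖A - A₀‖ * ‖B₀‖ := frobenius_norm_mul_sub_mul_le A A₀ B B₀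
    _ ≤ max ‖A‖ ‖B‖ * ‖B - B₀‖ + ‖A - A₀‖ * max ‖A‖ ‖B‖ := by
        gcongr
        exacts [le_max_left _ _, hB₀.trans (le_max_right _ _)]
    _ = max ‖A‖ ‖B‖ * (Metric.infDist A K + Metric.infDist B K) := by
        rw [K.norm_sub_starProjection_eq_infDist, K.norm_sub_starProjection_eq_infDist]
        ring

end Matrix

theorem frobNorm_eq_norm {α : Type*} [Fintype α] (M : Matrix α α ℝ) : frobNorm M = ‖M‖ := by
  simp only [frobNorm, Matrix.frobenius_norm_def, Real.sqrt_eq_rpow, Real.norm_eq_abs, sq_abs,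
    Real.rpow_two]

def groupMatrixSubmodule (G : Type*) [Group G] : Submodule ℝ (Matrix G G ℝ) where
  carrier := groupMatrices G
  zero_mem' := ⟨0, fun _ _ => rfl⟩
  add_mem' := fun ⟨c, hc⟩ ⟨d, hd⟩ => ⟨c + d, fun h h' => by simp [hc, hd]⟩
  smul_mem' r _ := fun ⟨c, hc⟩ => ⟨r • c, fun h h' => by simp [hc]⟩

theorem mul_mem_groupMatrices {G : Type*} [Group G] [Fintype G] {A B : Matrix G G ℝ}
    (hA : A ∈ groupMatrices G) (hB : B ∈ groupMatrices G) : A * B ∈ groupMatrices G := by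
  obtain ⟨c, hc⟩ := hA
  obtain ⟨d, hd⟩ := hB
  refine ⟨fun g => ∑ u, c u * d (u⁻¹ * g), fun h h' => ?_⟩
  rw [Matrix.mul_apply]
  refine Fintype.sum_equiv ((Equiv.inv G).trans (Equiv.mulLeft h)) _ _ fun k => ?_
  simp only [Equiv.trans_apply, Equiv.inv_apply, Equiv.coe_mulLeft, hc, hd]
  congr 2
  group

theorem distGM_eq_infDist {G : Type*} [Group G] [Fintype G] (M : Matrix G G ℝ) :
    distGM M = Metric.infDist M (groupMatrices G) := by
  rw [distGM, Metric.infDist_eq_iInf, iInf]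
  congr 1
  ext d
  simp [frobNorm_eq_norm, dist_eq_norm, eq_comm]

/-- `dist(MN, GM) ≤ max{‖M‖, ‖N‖} (dist(M, GM) + dist(N, GM))`. -/
theorem distGM_mul_le (M N : Matrix G G ℝ) :
    distGM (M * N) ≤ max (frobNorm M) (frobNorm N) * (distGM M + distGM N) := by
  rw [distGM_eq_infDist, distGM_eq_infDist, distGM_eq_infDist, frobNorm_eq_norm, frobNorm_eq_norm]
  exact Matrix.infDist_mul_le_of_mul_mem (groupMatrixSubmodule G)
    (fun _ hA _ hB => mul_mem_groupMatrices hA hB) M N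
end
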